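/- arXiv:1310.1694 — 4 statements merged into one kernel-verified Lean document; each statement's English description precedes it below -/
import Mathlib

section
/- Let L be a Lie algebra over ℝ with a basis (X_i)_{i ∈ Fin n}, and let D be a Lie derivation of L with D X_i = ((i : ℕ) + 1) • X_i for every i ∈ Fin n (so the eigenvalue of X_i is i in 1-based labelling, i.e. the derivation has eigenvalue type 1 < 2 < ... < n). If for some i, j, k ∈ Fin n the coefficient of X_k in the basis expansion of ⁅X_i, X_j⁆ is nonzero, then (k : ℕ) + 1 = ((i : ℕ) + 1) + ((j : ℕ) + 1); in 1-based labels, k = i + j. In particular the index set of nonzero structure constants consists only of triples of the form (i, j, i + j). -/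
/-! By the Leibniz rule, `⁅X_i, X_j⁆` is an eigenvector of `D` with eigenvalue `(i + 1) + (j + 1)`.
Since `D` is diagonal in the basis `X`, every basis vector occurring in an eigenvector has the same
eigenvalue, and `X_k` has eigenvalue `k + 1`. -/

theorem LieDerivation.apply_lie_eq_smul_of_apply_eq_smul {R L : Type*} [CommRing R] [LieRing L]
    [LieAlgebra R L] (D : LieDerivation R L L) {x y : L} {a c : R} (hx : D x = a • x)
    (hy : D y = c • y) : D ⁅x, y⁆ = (a + c) • ⁅x, y⁆ := by
  rw [LieDerivation.apply_lie_eq_add, hx, hy, smul_lie, lie_smul, add_smul, add_comm]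

namespace Module.Basis

variable {ι R M : Type*} [CommRing R] [AddCommGroup M] [Module R M]

theorem repr_apply_of_apply_basis_eq_smul (b : Basis ι R M) {f : M →ₗ[R] M} {c : ι → R}
    (hf : ∀ m, f (b m) = c m • b m) (x : M) (k : ι) :
    b.repr (f x) k = c k * b.repr x k := by
  have hcomp : (b.coord k).comp f = c k • b.coord k :=
    b.ext fun m => by
      by_cases hm : m = k
      · subst hm; simp [hf]
      · simp [hf, Ne.symm hm]
  simpa using LinearMap.congr_fun hcomp x

theorem eq_of_repr_ne_zero_of_apply_eq_smul [IsDomain R] (b : Basis ι R M) {f : M →ₗ[R] M}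
    {c : ι → R} (hf : ∀ m, f (b m) = c m • b m) {x : M} {μ : R} (hx : f x = μ • x) {k : ι}
    (hk : b.repr x k ≠ 0) : c k = μ := by
  have h := b.repr_apply_of_apply_basis_eq_smul hf x k
  rw [hx, map_smul, Finsupp.smul_apply, smul_eq_mul] at h
  exact mul_right_cancel₀ hk h.symm

end Module.Basis

theorem ordered_derivation_index_set (n : ℕ) (L : Type*)
    [LieRing L] [LieAlgebra ℝ L] (b : Module.Basis (Fin n) ℝ L)
    (D : LieDerivation ℝ L L)
    (hD : ∀ i : Fin n, D (b i) = (((i : ℕ) + 1 : ℝ)) • b i)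
    (i j k : Fin n) (h : (b.repr ⁅b i, b j⁆) k ≠ 0) :
    (k : ℕ) + 1 = ((i : ℕ) + 1) + ((j : ℕ) + 1) := by
  have hbracket := D.apply_lie_eq_smul_of_apply_eq_smul (hD i) (hD j)
  have hk := b.eq_of_repr_ne_zero_of_apply_eq_smul (f := D) hD hbracket h
  exact_mod_cast hk
end

section
/- Let λ : Fin n → ℝ be injective with λ i > 0 for all i. For a triple (i, j, k) of elements of Fin n, let y(i,j,k) : Fin n → ℝ be the root vector defined by y(i,j,k) l = (if l = i then 1 else 0) + (if l = j then 1 else 0) − (if l = k then 1 else 0). Suppose (i₁, j₁, k₁) and (i₂, j₂, k₂) are triples with i₁ < j₁, i₂ < j₂, λ i₁ + λ j₁ = λ k₁ and λ i₂ + λ j₂ = λ k₂. Then the dot product ∑ l, y(i₁,j₁,k₁) l * y(i₂,j₂,k₂) l is not equal to 2. (Hence the Gram matrix of the root vectors of a nilpotent Lie algebra admitting a derivation with distinct positive real eigenvalues contains no entry equal to 2.) -/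
/-- The root vector of a triple `(i, j, k)` of indices. -/
def rootVec {n : ℕ} (i j k : Fin n) : Fin n → ℝ :=
  fun l => (if l = i then 1 else 0) + (if l = j then 1 else 0) - (if l = k then 1 else 0)

set_option maxHeartbeats 2000000 in
theorem gram_entry_ne_two (n : ℕ) (lam : Fin n → ℝ)
    (hinj : Function.Injective lam) (hpos : ∀ i, 0 < lam i)
    (i₁ j₁ k₁ i₂ j₂ k₂ : Fin n)
    (h₁ : i₁ < j₁) (h₂ : i₂ < j₂)
    (hs₁ : lam i₁ + lam j₁ = lam k₁) (hs₂ : lam i₂ + lam j₂ = lam k₂) :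
    (∑ l, rootVec i₁ j₁ k₁ l * rootVec i₂ j₂ k₂ l) ≠ 2 := by
  have key : (∑ l, rootVec i₁ j₁ k₁ l * rootVec i₂ j₂ k₂ l) =
      ((if i₂ = i₁ then (1:ℝ) else 0) + (if i₂ = j₁ then 1 else 0) - (if i₂ = k₁ then 1 else 0))
      + ((if j₂ = i₁ then 1 else 0) + (if j₂ = j₁ then 1 else 0) - (if j₂ = k₁ then 1 else 0))
      - ((if k₂ = i₁ then 1 else 0) + (if k₂ = j₁ then 1 else 0) - (if k₂ = k₁ then 1 else 0)) := by
    simp only [rootVec, mul_add, add_mul, mul_sub, sub_mul, ite_mul, mul_ite, mul_one, mul_zero,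
      one_mul, zero_mul, Finset.sum_add_distrib, Finset.sum_sub_distrib,
      Finset.sum_ite_eq', Finset.mem_univ, if_true]
  rw [key]
  have hne1 : i₁ ≠ j₁ := ne_of_lt h₁
  have hne2 : i₂ ≠ j₂ := ne_of_lt h₂
  have hk1i : k₁ ≠ i₁ := fun h => by have := hpos j₁; rw [h] at hs₁; linarith
  have hk1j : k₁ ≠ j₁ := fun h => by have := hpos i₁; rw [h] at hs₁; linarith
  have hk2i : k₂ ≠ i₂ := fun h => by have := hpos j₂; rw [h] at hs₂; linarith
  have hk2j : k₂ ≠ j₂ := fun h => by have := hpos i₂; rw [h] at hs₂; linarith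
  by_cases h11 : i₂ = i₁ <;> by_cases h12 : i₂ = j₁ <;> by_cases h13 : i₂ = k₁ <;>
    by_cases h21 : j₂ = i₁ <;> by_cases h22 : j₂ = j₁ <;> by_cases h23 : j₂ = k₁ <;>
    by_cases h31 : k₂ = i₁ <;> by_cases h32 : k₂ = j₁ <;> by_cases h33 : k₂ = k₁ <;>
    first
    | (norm_num [h11, h12, h13, h21, h22, h23, h31, h32, h33, hne1, hne2, hk1i, hk1j,
        hk2i, hk2j, hne1.symm, hne2.symm, hk1i.symm, hk1j.symm, hk2i.symm, hk2j.symm]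
       done)
    | (exfalso; first
        | (refine h33 (hinj ?_); linarith [congrArg lam h11, congrArg lam h22])
        | (refine h22 (hinj ?_); linarith [congrArg lam h11, congrArg lam h33])
        | (refine h11 (hinj ?_); linarith [congrArg lam h22, congrArg lam h33])
        | (refine h21 (hinj ?_); linarith [congrArg lam h12, congrArg lam h33])
        | (refine h12 (hinj ?_); linarith [congrArg lam h21, congrArg lam h33])
        | (rw [← h12, ← h21] at h₁; exact absurd (h₂.trans h₁) (lt_irrefl _))
        | (simp_all; done))
end

section
/- Let L be a Lie algebra over ℝ with basis X_1, ..., X_9 (b : Basis (Fin 9) ℝ L, with 1-based labels), and let α : ℕ → ℕ → ℝ be such that for all 1 ≤ i < j ≤ 9 one has ⁅X_i, X_j⁆ = α i j • X_{i+j} when i + j ≤ 9 and ⁅X_i, X_j⁆ = 0 when i + j > 9 (so L admits a derivation of eigenvalue type 1 < 2 < ... < 9). Then the Jacobi identity forces the following equations on the structure constants: α 1 3 * α 2 4 = α 2 3 * α 1 5; α 1 2 * α 3 4 + α 1 4 * α 2 5 = α 2 4 * α 1 6; α 1 2 * α 3 5 + α 1 5 * α 2 6 = α 2 5 * α 1 7;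 α 1 4 * α 3 5 = α 3 4 * α 1 7; α 1 2 * α 3 6 + α 1 6 * α 2 7 = α 2 6 * α 1 8; α 1 3 * α 4 5 + α 1 5 * α 3 6 = α 3 5 * α 1 8; and α 2 4 * α 3 6 = α 2 3 * α 4 5 + α 3 4 * α 2 7. -/
/-!
Extending `α` skew-symmetrically to `skewExtend α` makes `⁅X i, X j⁆ = skewExtend α i j • X (i + j)`
hold for all positive `i, j` with `i + j ≤ 9`. For a triple with `i + j + k ≤ 9`, the Jacobi
identity `⁅X i, ⁅X j, X k⁆⁆ = ⁅⁅X i, X j⁆, X k⁆ + ⁅X j, ⁅X i, X k⁆⁆` then compares multiples of the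
basis vector `X (i + j + k)`, so their coefficients agree. The seven equations come from the
triples `(1,2,3)`, `(1,2,4)`, `(1,2,5)`, `(1,3,4)`, `(1,2,6)`, `(1,3,5)` and `(2,3,4)`.
-/
def skewExtend {R : Type*} [Neg R] [Zero R] (α : ℕ → ℕ → R) (i j : ℕ) : R :=
  if i < j then α i j else if j < i then -α j i else 0

section GradedBrackets

variable {R L : Type*} [CommRing R] [LieRing L] [LieAlgebra R L]
  (X : ℕ → L) (α : ℕ → ℕ → R) (N : ℕ)

theorem lie_eq_skewExtend_smul
    (hbr : ∀ i j : ℕ, 1 ≤ i → i < j → i + j ≤ N →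
      ⁅X i, X j⁆ = α i j • X (i + j))
    {i j : ℕ} (hi : 1 ≤ i) (hj : 1 ≤ j) (hN : i + j ≤ N) :
    ⁅X i, X j⁆ = skewExtend α i j • X (i + j) := by
  rcases lt_trichotomy i j with hij | rfl | hji
  · simp [skewExtend, hij, hbr i j hi hij hN]
  · simp [skewExtend]
  · rw [← lie_skew, hbr j i hj hji (by omega), add_comm j i]
    simp [skewExtend, hji, hji.not_gt]

theorem skewExtend_jacobi [IsDomain R] [Module.IsTorsionFree R L]
    (hbr : ∀ i j : ℕ, 1 ≤ i → i < j → i + j ≤ N →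
      ⁅X i, X j⁆ = α i j • X (i + j))
    {i j k : ℕ} (hi : 1 ≤ i) (hj : 1 ≤ j) (hk : 1 ≤ k) (hN : i + j + k ≤ N)
    (hX : X (i + j + k) ≠ 0) :
    skewExtend α j k * skewExtend α i (j + k) =
      skewExtend α i j * skewExtend α (i + j) k +
        skewExtend α i k * skewExtend α j (i + k) := by
  have lie (a b : ℕ) := lie_eq_skewExtend_smul X α N hbr (i := a) (j := b)
  have jacobi := leibniz_lie (X i) (X j) (X k)
  rw [lie j k hj hk (by omega), lie i j hi hj (by omega), lie i k hi hk (by omega),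
    lie_smul, smul_lie, lie_smul, lie i (j + k) hi (by omega) (by omega),
    lie (i + j) k (by omega) hk (by omega), lie j (i + k) hj (by omega) (by omega),
    smul_smul, smul_smul, smul_smul] at jacobi
  simp only [← add_assoc, add_comm j i, ← add_smul] at jacobi
  exact smul_left_injective R hX jacobi

end GradedBrackets

theorem nine_dim_ordered_jacobi_equations_general (L : Type*)
    [LieRing L] [LieAlgebra ℝ L] (b : Module.Basis (Fin 9) ℝ L)
    (X : ℕ → L) (hX : ∀ i : Fin 9, X ((i : ℕ) + 1) = b i)
    (α : ℕ → ℕ → ℝ)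
    (hbr : ∀ i j : ℕ, 1 ≤ i → i < j → j ≤ 9 → i + j ≤ 9 →
      ⁅X i, X j⁆ = α i j • X (i + j)) :
    α 1 3 * α 2 4 = α 2 3 * α 1 5 ∧
    α 1 2 * α 3 4 + α 1 4 * α 2 5 = α 2 4 * α 1 6 ∧
    α 1 2 * α 3 5 + α 1 5 * α 2 6 = α 2 5 * α 1 7 ∧
    α 1 4 * α 3 5 = α 3 4 * α 1 7 ∧
    α 1 2 * α 3 6 + α 1 6 * α 2 7 = α 2 6 * α 1 8 ∧
    α 1 3 * α 4 5 + α 1 5 * α 3 6 = α 3 5 * α 1 8 ∧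
    α 2 4 * α 3 6 = α 2 3 * α 4 5 + α 3 4 * α 2 7 := by
  have hX_ne_zero (n : ℕ) (h1 : 1 ≤ n) (h9 : n ≤ 9) : X n ≠ 0 := by
    obtain ⟨m, rfl⟩ := Nat.exists_eq_add_of_le' h1
    rw [hX ⟨m, by omega⟩]
    exact b.ne_zero _
  have jacobi (i j k : ℕ) (h : 1 ≤ i ∧ 1 ≤ j ∧ 1 ≤ k ∧ i + j + k ≤ 9) :=
    skewExtend_jacobi X α 9 (fun i j hi hij hN ↦ hbr i j hi hij (by omega) hN)
      h.1 h.2.1 h.2.2.1 h.2.2.2 (hX_ne_zero _ (by omega) h.2.2.2)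
  have h123 := jacobi 1 2 3 (by decide)
  have h124 := jacobi 1 2 4 (by decide)
  have h125 := jacobi 1 2 5 (by decide)
  have h134 := jacobi 1 3 4 (by decide)
  have h126 := jacobi 1 2 6 (by decide)
  have h135 := jacobi 1 3 5 (by decide)
  have h234 := jacobi 2 3 4 (by decide)
  norm_num [skewExtend] at h123 h124 h125 h134 h126 h135 h234
  refine ⟨?_, ?_, ?_, ?_, ?_, ?_, ?_⟩ <;> linarith

theorem nine_dim_ordered_jacobi_equations (L : Type*)
    [LieRing L] [LieAlgebra ℝ L] (b : Module.Basis (Fin 9) ℝ L)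
    (X : ℕ → L) (hX : ∀ i : Fin 9, X ((i : ℕ) + 1) = b i)
    (α : ℕ → ℕ → ℝ)
    (hbr : ∀ i j : ℕ, 1 ≤ i → i < j → j ≤ 9 → i + j ≤ 9 →
      ⁅X i, X j⁆ = α i j • X (i + j))
    (hzero : ∀ i j : ℕ, 1 ≤ i → i < j → j ≤ 9 → 9 < i + j → ⁅X i, X j⁆ = 0) :
    α 1 3 * α 2 4 = α 2 3 * α 1 5 ∧
    α 1 2 * α 3 4 + α 1 4 * α 2 5 = α 2 4 * α 1 6 ∧
    α 1 2 * α 3 5 + α 1 5 * α 2 6 = α 2 5 * α 1 7 ∧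
    α 1 4 * α 3 5 = α 3 4 * α 1 7 ∧
    α 1 2 * α 3 6 + α 1 6 * α 2 7 = α 2 6 * α 1 8 ∧
    α 1 3 * α 4 5 + α 1 5 * α 3 6 = α 3 5 * α 1 8 ∧
    α 2 4 * α 3 6 = α 2 3 * α 4 5 + α 3 4 * α 2 7 :=
  nine_dim_ordered_jacobi_equations_general L b X hX α hbr
end

section
/- Let V = EuclideanSpace ℝ (Fin n) with its standard orthonormal basis (e_i), and let μ : V →ₗ[ℝ] V →ₗ[ℝ] V be a bilinear map satisfying μ x y = −μ y x for all x, y ∈ V. Set α i j l = ⟪μ (e i) (e j), e l⟫, and define the nil-Ricci form ric(x, y) = −(1/2) ∑_i ⟪μ x (e i), μ y (e i)⟫ + (1/4) ∑_i ∑_j ⟪μ (e i) (e j), x⟫ * ⟪μ (e i) (e j), y⟫. Then for every k ∈ Fin n, ric(e k, e k) = −(1/2) ∑_{i < j} ∑_l (α i j l)^2 * ((if i = k then 1 else 0) + (if j = k then 1 else 0) − (if l = k then 1 else 0)); that is, the diagonal entries of the nil-Ricci form with respect to the basis are given by −(1/2)·Yᵀ v, where Y is the root matrix with rows e_i + e_j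 − e_l weighted over the triples (i, j, l) with i < j and v is the vector of squared structure constants (α i j l)^2. -/
open scoped RealInnerProductSpace

open Finset

/-!
By Parseval, `ric(e_k, e_k) = -(1/2) ∑_{i,l} α_{kil}² + (1/4) ∑_{i,j} α_{ijk}²`.
On the other side, `α_{ijl}² (δ_{ik} + δ_{jk} - δ_{lk})` is symmetric in `i, j` and vanishes
for `i = j` because `μ` is antisymmetric, so the sum over `i < j` is half the sum over all
`i, j`; the Kronecker deltas then collapse that full sum to
`2 ∑_{j,l} α_{kjl}² - ∑_{i,j} α_{ijk}²`.
-/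

theorem sum_sum_eq_two_nsmul_sum_sum_filter_lt {ι M : Type*} [Fintype ι] [LinearOrder ι]
    [AddCommMonoid M] (g : ι → ι → M) (hsymm : ∀ i j, g i j = g j i)
    (hdiag : ∀ i, g i i = 0) :
    ∑ i, ∑ j, g i j = 2 • ∑ i, ∑ j ∈ univ.filter (fun j => i < j), g i j := by
  have hsplit :
      ∀ i j, g i j = (if i < j then g i j else 0) + (if j < i then g j i else 0) := by
    intro i j
    rcases lt_trichotomy i j with h | rfl | h
    · simp [h, h.not_gt]
    · simp [hdiag]
    · simp [h, h.not_gt, hsymm i j]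
  calc ∑ i, ∑ j, g i j
      = ∑ i, ∑ j, (if i < j then g i j else 0) +
          ∑ i, ∑ j, (if j < i then g j i else 0) := by
        simp only [← sum_add_distrib, ← hsplit]
    _ = 2 • ∑ i, ∑ j ∈ univ.filter (fun j => i < j), g i j := by
        rw [sum_comm (f := fun i j => if j < i then g j i else 0), two_nsmul]
        simp only [sum_filter]

/-- The `k`-th coordinate of the root `e_i + e_j - e_l`. -/
def rootCoord {ι R : Type*} [DecidableEq ι] [Ring R] (i j l k : ι) : R :=
  (if i = k then 1 else 0) + (if j = k then 1 else 0) - (if l = k then 1 else 0)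

theorem sum_sum_sum_mul_rootCoord {ι R : Type*} [Fintype ι] [DecidableEq ι] [CommRing R]
    (f : ι → ι → ι → R) (k : ι) :
    ∑ i, ∑ j, ∑ l, f i j l * rootCoord i j l k =
      ∑ j, ∑ l, f k j l + ∑ i, ∑ l, f i k l - ∑ i, ∑ j, f i j k := by
  simp only [rootCoord, mul_sub, mul_add, mul_ite, mul_one, mul_zero, sum_add_distrib,
    sum_sub_distrib, sum_ite_irrel, sum_const_zero, sum_ite_eq', mem_univ, if_true]

section NilRicci

variable {ι E : Type*} [Fintype ι] [NormedAddCommGroup E] [InnerProductSpace ℝ E]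
  (b : OrthonormalBasis ι ℝ E)

noncomputable def structureConst (μ : E →ₗ[ℝ] E →ₗ[ℝ] E) (i j l : ι) : ℝ :=
  ⟪μ (b i) (b j), b l⟫

noncomputable def nilRicci (μ : E →ₗ[ℝ] E →ₗ[ℝ] E) (x y : E) : ℝ :=
  -(1/2) * ∑ i, ⟪μ x (b i), μ y (b i)⟫ +
    (1/4) * ∑ i, ∑ j, ⟪μ (b i) (b j), x⟫ * ⟪μ (b i) (b j), y⟫

variable {μ : E →ₗ[ℝ] E →ₗ[ℝ] E}

theorem structureConst_swap (hμ : ∀ x y, μ x y = - μ y x) (i j l : ι) :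
    structureConst b μ j i l = - structureConst b μ i j l := by
  rw [structureConst, structureConst, hμ, inner_neg_left]

theorem structureConst_self (hμ : ∀ x y, μ x y = - μ y x) (i l : ι) :
    structureConst b μ i i l = 0 :=
  self_eq_neg.mp (structureConst_swap b hμ i i l)

theorem structureConst_swap_sq (hμ : ∀ x y, μ x y = - μ y x) (i j l : ι) :
    structureConst b μ j i l ^ 2 = structureConst b μ i j l ^ 2 := by
  rw [structureConst_swap b hμ, neg_sq]

theorem nilRicci_self_basis (k : ι) :
    nilRicci b μ (b k) (b k) =
      -(1/2) * ∑ i, ∑ l, structureConst b μ k i l ^ 2 +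
        (1/4) * ∑ i, ∑ j, structureConst b μ i j k ^ 2 := by
  have hparseval : ∀ v : E, ⟪v, v⟫ = ∑ l, ⟪v, b l⟫ ^ 2 := fun v => by
    rw [← b.sum_inner_mul_inner]
    exact sum_congr rfl fun l _ => by rw [real_inner_comm (b l), sq]
  simp only [nilRicci, structureConst, hparseval, sq]

theorem nilRicci_self_basis_eq_sum_rootCoord [LinearOrder ι] (hμ : ∀ x y, μ x y = - μ y x)
    (k : ι) :
    nilRicci b μ (b k) (b k) =
      -(1/2) * ∑ i, ∑ j ∈ univ.filter (fun j => i < j), ∑ l,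
        structureConst b μ i j l ^ 2 * rootCoord i j l k := by
  have hhalf := sum_sum_eq_two_nsmul_sum_sum_filter_lt
    (fun i j => ∑ l, structureConst b μ i j l ^ 2 * rootCoord i j l k)
    (fun i j => sum_congr rfl fun l _ => by
      rw [structureConst_swap_sq b hμ, rootCoord, rootCoord, add_comm (ite (i = k) _ _)])
    (fun i => sum_eq_zero fun l _ => by rw [structureConst_self b hμ, sq, zero_mul, zero_mul])
  have hcollapse := sum_sum_sum_mul_rootCoord (fun i j l => structureConst b μ i j l ^ 2) k
  have hcol_eq_row : ∑ i, ∑ l, structureConst b μ i k l ^ 2 =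
      ∑ i, ∑ l, structureConst b μ k i l ^ 2 :=
    sum_congr rfl fun i _ => sum_congr rfl fun l _ => structureConst_swap_sq b hμ k i l
  rw [two_nsmul] at hhalf
  rw [nilRicci_self_basis]
  linarith

end NilRicci

theorem nil_ricci_diagonal_via_root_matrix (n : ℕ)
    (μ : EuclideanSpace ℝ (Fin n) →ₗ[ℝ] EuclideanSpace ℝ (Fin n) →ₗ[ℝ] EuclideanSpace ℝ (Fin n))
    (hμ : ∀ x y, μ x y = - μ y x)
    (e : Fin n → EuclideanSpace ℝ (Fin n))
    (he : ∀ i, e i = EuclideanSpace.single i 1)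
    (α : Fin n → Fin n → Fin n → ℝ)
    (hα : ∀ i j l, α i j l = ⟪μ (e i) (e j), e l⟫)
    (ric : EuclideanSpace ℝ (Fin n) → EuclideanSpace ℝ (Fin n) → ℝ)
    (hric : ∀ x y, ric x y =
      -(1/2) * ∑ i, ⟪μ x (e i), μ y (e i)⟫ +
      (1/4) * ∑ i, ∑ j, ⟪μ (e i) (e j), x⟫ * ⟪μ (e i) (e j), y⟫) :
    ∀ k : Fin n, ric (e k) (e k) =
      -(1/2) * ∑ i, ∑ j ∈ Finset.univ.filter (fun j => i < j), ∑ l,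
        (α i j l) ^ 2 *
          ((if i = k then (1 : ℝ) else 0) + (if j = k then 1 else 0) -
            (if l = k then 1 else 0)) := by
  obtain rfl : e = EuclideanSpace.basisFun (Fin n) ℝ :=
    funext fun i => by rw [he, EuclideanSpace.basisFun_apply]
  obtain rfl : α = structureConst (EuclideanSpace.basisFun (Fin n) ℝ) μ := funext₃ hα
  obtain rfl : ric = nilRicci (EuclideanSpace.basisFun (Fin n) ℝ) μ := funext₂ hric
  exact nilRicci_self_basis_eq_sum_rootCoord _ hμ
end
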